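/- arXiv:2312.04536 — 4 statements merged into one kernel-verified Lean document; each statement's English description precedes it below -/
import Mathlib

section
/- For u ∈ [1/2, 1), the Fourier-defined fractional Laplacian coupling constants J(r) := −(1/2π)·∫_{−π}^{π} (1−cos θ)^u · cos(rθ) dθ are positive for every integer r ≥ 1, and satisfy J(r) ~ c(u)·r^{−(2u+1)} as r → ∞ for some constant c(u) > 0. -/
/-!
The function `(1 - cos θ) ^ u * (sin ((r + 1) θ) - sin (r θ))` vanishes at `±π` and its derivative
is `(1 - cos θ) ^ u * ((u - r) cos (r θ) + (u + r + 1) cos ((r + 1) θ))`, which gives the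
recurrence `(r + u + 1) J(r + 1) = (r - u) J(r)`. As `J(0) < 0`, this makes `J(1) > 0` and
`J(r + 1) = J(1) ∏_{j < r} (1 - u + j) / (2 + u + j) > 0`. By Euler's limit formula for `Γ`,
`m ^ (2u + 1)` times the product up to `m` tends to `Γ(2 + u) / Γ(1 - u)`.
-/

open Real Filter Finset MeasureTheory intervalIntegral Topology

/-- The Fourier-defined fractional Laplacian coupling constants
`J(r) = −(1/2π)·∫_{−π}^{π} (1−cos θ)^u · cos(rθ) dθ`. -/
noncomputable def fracJ (u : ℝ) (r : ℕ) : ℝ :=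
  -(1 / (2 * Real.pi)) *
    ∫ θ in (-Real.pi)..Real.pi, (1 - Real.cos θ) ^ u * Real.cos (r * θ)

lemma sin_mul_sin_add_one_mul_sub_sin_mul (r θ : ℝ) :
    sin θ * (sin ((r + 1) * θ) - sin (r * θ)) =
      (1 - cos θ) * (cos (r * θ) + cos ((r + 1) * θ)) := by
  rw [add_mul, one_mul, sin_add, cos_add]
  linear_combination cos (r * θ) * sin_sq_add_cos_sq θ

lemma hasDerivAt_one_sub_cos_rpow_mul_sin_sub_sin (u r : ℝ) {θ : ℝ} (hθ : cos θ ≠ 1) :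
    HasDerivAt (fun t => (1 - cos t) ^ u * (sin ((r + 1) * t) - sin (r * t)))
      ((1 - cos θ) ^ u * ((u - r) * cos (r * θ) + (u + r + 1) * cos ((r + 1) * θ))) θ := by
  have hpos : 1 - cos θ ≠ 0 := sub_ne_zero.mpr hθ.symm
  have hpow := ((hasDerivAt_cos θ).const_sub 1).rpow_const (p := u) (Or.inl hpos)
  have hsin : ∀ s : ℝ, HasDerivAt (fun t => sin (s * t)) (cos (s * θ) * s) θ := fun s => by
    simpa using ((hasDerivAt_id θ).const_mul s).sin
  refine (hpow.fun_mul ((hsin (r + 1)).fun_sub (hsin r))).congr_deriv ?_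
  rw [rpow_sub_one hpos]
  field_simp
  linear_combination (u * (1 - cos θ) ^ u) * sin_mul_sin_add_one_mul_sub_sin_mul r θ

section

variable {u : ℝ}

lemma continuous_one_sub_cos_rpow (hu : 0 ≤ u) : Continuous fun θ : ℝ => (1 - cos θ) ^ u :=
  (continuous_const.sub continuous_cos).rpow_const fun _ => Or.inr hu

lemma integral_one_sub_cos_rpow_mul_cos_combination (hu : 0 ≤ u) (r : ℕ) :
    ∫ θ in -π..π, (1 - cos θ) ^ u * ((u - r) * cos (r * θ) + (u + r + 1) * cos ((r + 1) * θ))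
      = 0 := by
  have hsin : ∀ n : ℕ, sin (n * π) = 0 ∧ sin (n * -π) = 0 := fun n => by
    simp [mul_neg, sin_nat_mul_pi]
  obtain ⟨hr, -⟩ := hsin r
  obtain ⟨hr1, -⟩ := hsin (r + 1)
  push_cast at hr1
  -- For `u < 1/2` the antiderivative is not differentiable at `θ = 0`; one point does not matter.
  rw [integral_eq_of_hasDerivAt_off_countable_of_le _ _ (by linarith [pi_pos])
    (Set.countable_singleton 0)
    ((continuous_one_sub_cos_rpow hu).mul (by fun_prop)).continuousOn
    (fun θ hθ => hasDerivAt_one_sub_cos_rpow_mul_sin_sub_sin u r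
      (mt (cos_eq_one_iff_of_lt_of_lt (by linarith [hθ.1.1, pi_pos])
        (by linarith [hθ.1.2, pi_pos])).mp hθ.2))
    (((continuous_one_sub_cos_rpow hu).mul (by fun_prop)).intervalIntegrable _ _)]
  simp [hr, hr1]

lemma fracJ_succ (hu : 0 ≤ u) (r : ℕ) :
    fracJ u (r + 1) = (r - u) / (r + u + 1) * fracJ u r := by
  have hint : ∀ s : ℝ,
      IntervalIntegrable (fun θ => (1 - cos θ) ^ u * cos (s * θ)) volume (-π) π :=
    fun s => ((continuous_one_sub_cos_rpow hu).mul (by fun_prop)).intervalIntegrable _ _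
  have key := integral_one_sub_cos_rpow_mul_cos_combination hu r
  simp only [mul_add, mul_left_comm ((1 - cos _) ^ u)] at key
  rw [integral_add ((hint _).const_mul _) ((hint _).const_mul _),
    intervalIntegral.integral_const_mul, intervalIntegral.integral_const_mul] at key
  unfold fracJ
  push_cast
  have : (r : ℝ) + u + 1 ≠ 0 := by positivity
  field_simp
  linear_combination -key

lemma fracJ_zero_neg (hu : 0 ≤ u) : fracJ u 0 < 0 := by
  have hint : 0 < ∫ θ in -π..π, (1 - cos θ) ^ u :=
    integral_pos (by linarith [pi_pos]) (continuous_one_sub_cos_rpow hu).continuousOn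
      (fun θ _ => rpow_nonneg (by linarith [cos_le_one θ]) u)
      ⟨π, by simp [pi_pos.le], by norm_num [rpow_pos_of_pos]⟩
  unfold fracJ
  simp only [CharP.cast_eq_zero, zero_mul, cos_zero, mul_one]
  exact mul_neg_of_neg_of_pos (neg_neg_of_pos (by positivity)) hint

lemma fracJ_succ_eq_prod (hu : 0 ≤ u) (n : ℕ) :
    fracJ u (n + 1) = fracJ u 1 * ∏ j ∈ range n, (1 - u + j) / (2 + u + j) := by
  induction n with
  | zero => simp
  | succ n ih =>
    rw [fracJ_succ hu, ih, prod_range_succ]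
    push_cast
    ring

lemma fracJ_one_pos (hu : 0 < u) : 0 < fracJ u 1 := by
  have h := fracJ_succ hu.le 0
  rw [Nat.cast_zero, zero_sub, zero_add, neg_div] at h
  rw [h]
  exact mul_pos_of_neg_of_neg (neg_neg_of_pos (by positivity)) (fracJ_zero_neg hu.le)

lemma fracJ_pos (hu0 : 0 < u) (hu1 : u < 1) {r : ℕ} (hr : 1 ≤ r) : 0 < fracJ u r := by
  obtain ⟨n, rfl⟩ := Nat.exists_eq_add_of_le' hr
  rw [fracJ_succ_eq_prod hu0.le]
  refine mul_pos (fracJ_one_pos hu0) (prod_pos fun j _ => div_pos ?_ (by positivity))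
  linarith [j.cast_nonneg (α := ℝ)]

end

lemma GammaSeq_div_GammaSeq (a b : ℝ) {m : ℕ} (hm : m ≠ 0) :
    GammaSeq a m / GammaSeq b m =
      (m : ℝ) ^ (a - b) * ∏ j ∈ range (m + 1), (b + j) / (a + j) := by
  have hm' : (0 : ℝ) < m := by positivity
  rw [GammaSeq, GammaSeq, rpow_sub hm', prod_div_distrib]
  field_simp

lemma tendsto_rpow_mul_prod_div {a b : ℝ} (hb : Gamma b ≠ 0) :
    Tendsto (fun m : ℕ => (m : ℝ) ^ (a - b) * ∏ j ∈ range (m + 1), (b + j) / (a + j)) atTop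
      (𝓝 (Gamma a / Gamma b)) :=
  ((GammaSeq_tendsto_Gamma a).div (GammaSeq_tendsto_Gamma b) hb).congr'
    ((eventually_ne_atTop 0).mono fun _ hm => GammaSeq_div_GammaSeq a b hm)

lemma tendsto_fracJ_mul_rpow {u : ℝ} (hu0 : 0 < u) (hu1 : u < 1) :
    Tendsto (fun r : ℕ => fracJ u r * (r : ℝ) ^ (2 * u + 1)) atTop
      (𝓝 (fracJ u 1 * (Gamma (2 + u) / Gamma (1 - u)))) := by
  rw [← tendsto_add_atTop_iff_nat 2]
  have hprod := tendsto_rpow_mul_prod_div (a := 2 + u)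
    (Gamma_pos_of_pos (by linarith : 0 < 1 - u)).ne'
  have hratio : Tendsto (fun m : ℕ => ((m : ℝ) / (m + 2)) ^ (2 * u + 1)) atTop (𝓝 1) := by
    simpa using (tendsto_natCast_div_add_atTop (2 : ℝ)).rpow_const (Or.inl one_ne_zero)
  have hlim := (hprod.const_mul (fracJ u 1)).div hratio one_ne_zero
  rw [div_one] at hlim
  refine hlim.congr' ((eventually_ne_atTop 0).mono fun m hm => ?_)
  have hm' : (0 : ℝ) < m := by positivity
  simp only [Pi.div_apply]
  rw [show fracJ u (m + 2) = fracJ u (m + 1 + 1) from rfl, fracJ_succ_eq_prod hu0.le (m + 1),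
    div_rpow hm'.le (by positivity), show 2 + u - (1 - u) = 2 * u + 1 by ring]
  push_cast
  field_simp

/-- For `u ∈ [1/2, 1)`, the coupling constants `J(r)` are positive for every
integer `r ≥ 1`, and satisfy `J(r) ~ c(u)·r^{−(2u+1)}` as `r → ∞` for some
constant `c(u) > 0`. -/
theorem fracJ_pos_and_asymptotics (u : ℝ) (hu : u ∈ Set.Ico (1 / 2 : ℝ) 1) :
    (∀ r : ℕ, 1 ≤ r → 0 < fracJ u r) ∧
    ∃ c : ℝ, 0 < c ∧
      Filter.Tendsto (fun r : ℕ => fracJ u r * (r : ℝ) ^ (2 * u + 1))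
        Filter.atTop (nhds c) := by
  obtain ⟨hu_ge, hu1⟩ := hu
  have hu0 : 0 < u := by linarith
  refine ⟨fun r hr => fracJ_pos hu0 hu1 hr, _, ?_, tendsto_fracJ_mul_rpow hu0 hu1⟩
  have := fracJ_one_pos hu0
  have := Gamma_pos_of_pos (by linarith : 0 < 2 + u)
  have := Gamma_pos_of_pos (by linarith : 0 < 1 - u)
  positivity
end

section
/- For any s > −1 and any integer x ≥ 1, the series ∑_{n ≥ x} n^{−(2+s/2)}·exp(−x²/n) satisfies the asymptotics: as x → ∞, x^{2+s}·∑_{n ≥ x} n^{−(2+s/2)}·e^{−x²/n} converges to ∫_0^∞ u^{−(2+s/2)}·e^{−1/u} du. -/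
/-!
With `p = 2 + s/2` and `f u = u^(-p) e^(-1/u)`, the substitution `u = n/x²` turns
`x^(2+s) ∑_{n ≥ x} n^(-p) e^(-x²/n)` into the Riemann sum `x⁻² ∑_{n ≥ x} f(n/x²)`, which is the
integral over `(0, ∞)` of the step function `u ↦ f(⌈u x²⌉/x²)`, cut off below `(x - 1)/x² → 0`.
These step functions converge pointwise to `f`, and they are dominated by the integrable function
`min ((p/e)^p) (u^(-p))`, since `f v ≤ v^(-p) ≤ u^(-p)` for `v ≥ u` and `t^p e^(-t) ≤ (p/e)^p`.
Dominated convergence concludes.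
-/

open Set MeasureTheory Filter Topology Real

section RiemannSum

variable {E : Type*} [NormedAddCommGroup E] [NormedSpace ℝ E] [CompleteSpace E]

lemma Ioi_inter_natCeil_div_preimage_succ {h : ℝ} (hh : 0 < h) (n : ℕ) :
    Ioi 0 ∩ (fun u => ⌈u / h⌉₊) ⁻¹' {n + 1} = Ioc (n * h) ((n + 1) * h) := by
  ext u
  simp only [mem_inter_iff, mem_Ioi, mem_preimage, mem_singleton_iff, mem_Ioc,
    Nat.ceil_eq_iff n.add_one_ne_zero, Nat.add_sub_cancel, Nat.cast_add_one,
    lt_div_iff₀ hh, div_le_iff₀ hh]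
  constructor
  · rintro ⟨-, hlo, hhi⟩
    exact ⟨hlo, hhi⟩
  · rintro ⟨hlo, hhi⟩
    exact ⟨(by positivity : (0 : ℝ) ≤ n * h).trans_lt hlo, hlo, hhi⟩

theorem integral_Ioi_natCeil_div_eq_tsum {F : ℕ → E} {h : ℝ} (hh : 0 < h) (hF0 : F 0 = 0)
    (hF : IntegrableOn (fun u => F ⌈u / h⌉₊) (Ioi 0)) :
    ∫ u in Ioi 0, F ⌈u / h⌉₊ = ∑' n, h • F n := by
  set piece : ℕ → Set ℝ := fun n => Ioi 0 ∩ (fun u => ⌈u / h⌉₊) ⁻¹' {n}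
  have hunion : ⋃ n, piece n = Ioi 0 := by
    rw [← inter_iUnion, ← preimage_iUnion, iUnion_of_singleton, preimage_univ, inter_univ]
  have hmeas (n : ℕ) : MeasurableSet (piece n) :=
    measurableSet_Ioi.inter ((measurable_id.div_const h).nat_ceil (measurableSet_singleton n))
  have hdisj : Pairwise (Function.onFun Disjoint piece) :=
    (pairwise_disjoint_fiber _).mono fun _ _ => .mono inter_subset_right inter_subset_right
  rw [← hunion] at hF ⊢
  rw [integral_iUnion hmeas hdisj hF]
  congr 1 with n
  rw [setIntegral_congr_fun (hmeas n) (fun u hu => congrArg F hu.2), setIntegral_const]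
  cases n with
  | zero => simp [hF0]
  | succ n =>
    rw [show piece (n + 1) = _ from Ioi_inter_natCeil_div_preimage_succ hh n,
      Real.volume_real_Ioc_of_le (by gcongr; linarith)]
    ring_nf

lemma le_natCeil_div_mul {u h : ℝ} (hh : 0 < h) : u ≤ ⌈u / h⌉₊ * h :=
  (div_le_iff₀ hh).1 (Nat.le_ceil _)

lemma natCeil_div_mul_lt_add {u h : ℝ} (hu : 0 ≤ u) (hh : 0 < h) : ⌈u / h⌉₊ * h < u + h :=
  calc (⌈u / h⌉₊ : ℝ) * h < (u / h + 1) * h := by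
        gcongr; exact Nat.ceil_lt_add_one (div_nonneg hu hh.le)
    _ = u + h := by field_simp

lemma tendsto_natCeil_div_mul {ι : Type*} {l : Filter ι} {h : ι → ℝ} (hh : ∀ᶠ i in l, 0 < h i)
    (hh0 : Tendsto h l (𝓝 0)) {u : ℝ} (hu : 0 ≤ u) :
    Tendsto (fun i => ⌈u / h i⌉₊ * h i) l (𝓝 u) := by
  refine tendsto_of_tendsto_of_tendsto_of_le_of_le' tendsto_const_nhds
    (by simpa using tendsto_const_nhds.add hh0) ?_ ?_
  · filter_upwards [hh] with i hi using le_natCeil_div_mul hi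
  · filter_upwards [hh] with i hi using (natCeil_div_mul_lt_add hu hi).le

theorem tendsto_tsum_riemann_of_dominated {ι : Type*} {l : Filter ι} [l.IsCountablyGenerated]
    {f : ℝ → E} {D : ℝ → ℝ} (hf : ContinuousOn f (Ioi 0)) (hD : IntegrableOn D (Ioi 0))
    (hfD : ∀ u v, 0 < u → u ≤ v → ‖f v‖ ≤ D u)
    {h : ι → ℝ} {a : ι → ℕ} (hh : ∀ᶠ i in l, 0 < h i) (ha : ∀ᶠ i in l, 1 ≤ a i)
    (hah : Tendsto (fun i => a i * h i) l (𝓝 0)) :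
    Tendsto (fun i => ∑' n : ℕ, if a i ≤ n then h i • f (n * h i) else 0) l
      (𝓝 (∫ u in Ioi 0, f u)) := by
  set F : ι → ℕ → E := fun i n => if a i ≤ n then f (n * h i) else 0
  have hh0 : Tendsto h l (𝓝 0) := by
    refine tendsto_of_tendsto_of_tendsto_of_le_of_le' tendsto_const_nhds hah ?_ ?_
    · filter_upwards [hh] with i hi using hi.le
    · filter_upwards [hh, ha] with i hi hai
      exact le_mul_of_one_le_left hi.le (by exact_mod_cast hai)
  have hmeas (i : ι) :
      AEStronglyMeasurable (fun u => F i ⌈u / h i⌉₊) (volume.restrict (Ioi 0)) :=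
    (StronglyMeasurable.of_discrete.comp_measurable (f := F i)
      (measurable_id.div_const (h i)).nat_ceil).aestronglyMeasurable
  have hbound : ∀ᶠ i in l, ∀ u ∈ Ioi 0, ‖F i ⌈u / h i⌉₊‖ ≤ D u := by
    filter_upwards [hh] with i hi u hu
    by_cases han : a i ≤ ⌈u / h i⌉₊
    · simpa only [F, if_pos han] using hfD u _ hu (le_natCeil_div_mul hi)
    · simpa only [F, if_neg han, norm_zero] using (norm_nonneg _).trans (hfD u u hu le_rfl)
  have hlim (u : ℝ) (hu : u ∈ Ioi 0) : Tendsto (fun i => F i ⌈u / h i⌉₊) l (𝓝 (f u)) := by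
    have hev : ∀ᶠ i in l, f (⌈u / h i⌉₊ * h i) = F i ⌈u / h i⌉₊ := by
      filter_upwards [hh, hah.eventually (gt_mem_nhds hu)] with i hi hai
      have : a i ≤ ⌈u / h i⌉₊ := by
        exact_mod_cast ((lt_div_iff₀ hi).2 hai).le.trans (Nat.le_ceil _)
      simp only [F, if_pos this]
    exact ((hf.continuousAt (Ioi_mem_nhds hu)).tendsto.comp
      (tendsto_natCeil_div_mul hh hh0 hu.le)).congr' hev
  have hint : Tendsto (fun i => ∫ u in Ioi 0, F i ⌈u / h i⌉₊) l (𝓝 (∫ u in Ioi 0, f u)) :=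
    tendsto_integral_filter_of_dominated_convergence D (.of_forall hmeas)
      (hbound.mono fun _ hi => (ae_restrict_iff' measurableSet_Ioi).2 (ae_of_all _ hi)) hD
      ((ae_restrict_iff' measurableSet_Ioi).2 (ae_of_all _ hlim))
  refine hint.congr' ?_
  filter_upwards [hh, ha, hbound] with i hi hai hbi
  rw [integral_Ioi_natCeil_div_eq_tsum hi (if_neg (by omega)) (hD.mono' (hmeas i)
    ((ae_restrict_iff' measurableSet_Ioi).2 (ae_of_all _ hbi)))]
  simp only [F, smul_ite, smul_zero]

end RiemannSum

lemma rpow_mul_exp_neg_le {t p : ℝ} (ht : 0 ≤ t) (hp : 0 < p) :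
    t ^ p * exp (-t) ≤ (p * exp (-1)) ^ p :=
  calc t ^ p * exp (-t) = (p * (t / p * exp (-(t / p)))) ^ p := by
        rw [← mul_assoc, mul_div_cancel₀ t hp.ne', mul_rpow ht (exp_pos _).le, ← exp_mul,
          neg_mul, div_mul_cancel₀ t hp.ne']
    _ ≤ (p * exp (-1)) ^ p := by
        gcongr
        exact mul_exp_neg_le_exp_neg_one _

lemma rpow_neg_mul_exp_neg_one_div_le_min {p u v : ℝ} (hp : 0 < p) (hu : 0 < u) (huv : u ≤ v) :
    ‖v ^ (-p) * exp (-1 / v)‖ ≤ min ((p * exp (-1)) ^ p) (u ^ (-p)) := by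
  have hv : 0 < v := hu.trans_le huv
  rw [Real.norm_of_nonneg (by positivity)]
  refine le_min ?_ ?_
  · rw [rpow_neg hv.le, ← inv_rpow hv.le, neg_div, one_div]
    exact rpow_mul_exp_neg_le (inv_nonneg.2 hv.le) hp
  · calc v ^ (-p) * exp (-1 / v) ≤ v ^ (-p) * 1 := by
          gcongr
          exact exp_le_one_iff.2 (div_nonpos_of_nonpos_of_nonneg (by norm_num) hv.le)
      _ ≤ u ^ (-p) := by
          rw [mul_one]
          exact rpow_le_rpow_of_nonpos hu huv (by linarith)

lemma integrableOn_Ioi_min_rpow_neg {C p : ℝ} (hC : 0 ≤ C) (hp : 1 < p) :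
    IntegrableOn (fun u => min C (u ^ (-p))) (Ioi 0) := by
  have hmeas : Measurable (fun u : ℝ => min C (u ^ (-p))) := by fun_prop
  have hnorm : ∀ u ∈ Ioi (0 : ℝ), ‖min C (u ^ (-p))‖ = min C (u ^ (-p)) := fun u hu =>
    Real.norm_of_nonneg (le_min hC (rpow_nonneg (le_of_lt hu) _))
  rw [← Ioc_union_Ioi_eq_Ioi zero_le_one]
  refine IntegrableOn.union ?_ ?_
  · refine Measure.integrableOn_of_bounded (M := C) measure_Ioc_lt_top.ne
      hmeas.aestronglyMeasurable ?_
    refine (ae_restrict_iff' measurableSet_Ioc).2 (ae_of_all _ fun u hu => ?_)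
    rw [hnorm u hu.1]
    exact min_le_left _ _
  · refine (integrableOn_Ioi_rpow_of_lt (by linarith : -p < -1) one_pos).mono'
      hmeas.aestronglyMeasurable ?_
    refine (ae_restrict_iff' measurableSet_Ioi).2 (ae_of_all _ fun u hu => ?_)
    rw [hnorm u (mem_Ioi.2 (zero_lt_one.trans hu))]
    exact min_le_right _ _

lemma inv_sq_mul_rpow_neg_mul_exp {p x n : ℝ} (hx : 0 < x) (hn : 0 < n) :
    (x ^ 2)⁻¹ * ((n * (x ^ 2)⁻¹) ^ (-p) * exp (-1 / (n * (x ^ 2)⁻¹)))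
      = x ^ (2 * p - 2) * (n ^ (-p) * exp (-x ^ 2 / n)) := by
  have hscale : (n * (x ^ 2)⁻¹) ^ (-p) = n ^ (-p) * x ^ (2 * p) := by
    rw [mul_rpow hn.le (by positivity), inv_rpow (sq_nonneg x), rpow_neg (sq_nonneg x), inv_inv,
      ← rpow_two, ← rpow_mul hx.le]
  have hexp : -1 / (n * (x ^ 2)⁻¹) = -x ^ 2 / n := by
    field_simp
  rw [hscale, hexp, rpow_sub hx, rpow_two]
  ring

/-- For any `s > −1`, as `x → ∞`,
`x^{2+s} · ∑_{n ≥ x} n^{−(2+s/2)} e^{−x²/n}` converges to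
`∫_0^∞ u^{−(2+s/2)} e^{−1/u} du`. -/
theorem euler_maclaurin_bessel_tail (s : ℝ) (hs : -1 < s) :
    Filter.Tendsto
      (fun x : ℕ => (x : ℝ) ^ (2 + s) *
        ∑' n : ℕ, (if x ≤ n then
          (n : ℝ) ^ (-(2 + s / 2)) * Real.exp (-(x : ℝ) ^ 2 / n) else 0))
      Filter.atTop
      (nhds (∫ u in Set.Ioi (0 : ℝ), u ^ (-(2 + s / 2)) * Real.exp (-1 / u))) := by
  set p := 2 + s / 2 with hp_def
  have hp : 1 < p := by linarith
  have hcont : ContinuousOn (fun u : ℝ => u ^ (-p) * exp (-1 / u)) (Ioi 0) := by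
    fun_prop (disch := intro u hu; exact ne_of_gt hu)
  have hmesh : Tendsto (fun x : ℕ => (x : ℝ) * ((x : ℝ) ^ 2)⁻¹) atTop (𝓝 0) := by
    refine (tendsto_inv_atTop_zero.comp tendsto_natCast_atTop_atTop).congr' ?_
    filter_upwards [eventually_ge_atTop 1] with x hx
    have : (x : ℝ) ≠ 0 := by positivity
    simp only [Function.comp_apply]
    field_simp
  have hriemann := tendsto_tsum_riemann_of_dominated hcont
    (integrableOn_Ioi_min_rpow_neg (by positivity) hp)
    (fun u v hu huv => rpow_neg_mul_exp_neg_one_div_le_min (by linarith) hu huv)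
    ((eventually_gt_atTop 0).mono fun x hx => by positivity) (eventually_ge_atTop 1) hmesh
  refine hriemann.congr' ?_
  filter_upwards [eventually_ge_atTop 1] with x hx
  rw [← tsum_mul_left]
  congr 1 with n
  split_ifs with hxn
  · rw [smul_eq_mul, inv_sq_mul_rpow_neg_mul_exp (by positivity)
      (by exact_mod_cast (hx.trans hxn : 1 ≤ n)),
      show 2 * p - 2 = 2 + s by rw [hp_def]; ring]
  · rw [mul_zero]
end

section
/- For H ∈ (0,1), the function C(s,t) := (1/2)(|s|^{2H} + |t|^{2H} − |s−t|^{2H}) on R×R is a positive semidefinite kernel; i.e., for any finite set of points t_1,…,t_n ∈ R and reals λ_1,…,λ_n, the sum ∑_{i,j} λ_i λ_j C(t_i,t_j) is nonnegative. -/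
set_option maxHeartbeats 1000000

open MeasureTheory Set

lemma fbm_one_sub_cos_le_sq (x : ℝ) : 1 - Real.cos x ≤ x ^ 2 / 2 := by
  have h1 := Real.sin_sq_le_sq (x := x / 2)
  have h2 := Real.sin_sq_add_cos_sq (x / 2)
  have h3 := Real.cos_sq (x / 2)
  rw [show 2 * (x / 2) = x by ring] at h3
  nlinarith

lemma fbm_contOn (x : ℝ) {β : ℝ} {s : Set ℝ} (hs : ∀ u ∈ s, u ≠ 0) :
    ContinuousOn (fun u : ℝ => (1 - Real.cos (x * u)) * u ^ (-1 - β)) s := by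
  apply ContinuousOn.mul
  · exact (continuous_const.sub (Real.continuous_cos.comp (continuous_const.mul continuous_id))).continuousOn
  · exact ContinuousOn.rpow_const continuousOn_id (fun u hu => Or.inl (hs u hu))

lemma fbm_integrable {β : ℝ} (hβ0 : 0 < β) (hβ2 : β < 2) (x : ℝ) :
    IntegrableOn (fun u : ℝ => (1 - Real.cos (x * u)) * u ^ (-1 - β)) (Set.Ioi 0) := by
  have hunion : Set.Ioc (0:ℝ) 1 ∪ Set.Ioi 1 = Set.Ioi 0 := Set.Ioc_union_Ioi_eq_Ioi zero_le_one
  rw [← hunion]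
  apply IntegrableOn.union
  · -- on (0,1]: dominate by (x^2/2) * u^(1-β)
    have hg : IntegrableOn (fun u : ℝ => x ^ 2 / 2 * u ^ (1 - β)) (Set.Ioc 0 1) := by
      apply Integrable.const_mul
      have : IntervalIntegrable (fun u : ℝ => u ^ (1 - β)) volume 0 1 :=
        intervalIntegral.intervalIntegrable_rpow' (by linarith)
      rwa [intervalIntegrable_iff_integrableOn_Ioc_of_le zero_le_one] at this
    apply Integrable.mono' hg
    · exact (fbm_contOn x (fun u hu => ne_of_gt hu.1)).aestronglyMeasurable measurableSet_Ioc
    · filter_upwards [ae_restrict_mem measurableSet_Ioc] with u hu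
      have hu0 : (0:ℝ) < u := hu.1
      have hr : (0:ℝ) ≤ u ^ (-1 - β) := Real.rpow_nonneg hu0.le _
      have hc : (0:ℝ) ≤ 1 - Real.cos (x * u) := by
        have := Real.cos_le_one (x * u); linarith
      rw [Real.norm_eq_abs, abs_of_nonneg (mul_nonneg hc hr)]
      have hb : 1 - Real.cos (x * u) ≤ (x * u) ^ 2 / 2 := fbm_one_sub_cos_le_sq (x * u)
      calc (1 - Real.cos (x * u)) * u ^ (-1 - β)
          ≤ ((x * u) ^ 2 / 2) * u ^ (-1 - β) := mul_le_mul_of_nonneg_right hb hr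
        _ = x ^ 2 / 2 * (u ^ (2:ℝ) * u ^ (-1 - β)) := by
            rw [Real.rpow_two]; ring
        _ = x ^ 2 / 2 * u ^ (1 - β) := by
            rw [← Real.rpow_add hu0, show (2:ℝ) + (-1 - β) = 1 - β by ring]
  · -- on (1,∞): dominate by 2 * u^(-1-β)
    have hg : IntegrableOn (fun u : ℝ => 2 * u ^ (-1 - β)) (Set.Ioi 1) :=
      (integrableOn_Ioi_rpow_of_lt (by linarith) one_pos).const_mul 2
    apply Integrable.mono' hg
    · exact (fbm_contOn x (fun u hu => ne_of_gt (lt_trans one_pos hu))).aestronglyMeasurable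
        measurableSet_Ioi
    · filter_upwards [ae_restrict_mem measurableSet_Ioi] with u hu
      have hu0 : (0:ℝ) < u := lt_trans one_pos hu
      have hr : (0:ℝ) ≤ u ^ (-1 - β) := Real.rpow_nonneg hu0.le _
      have hc : (0:ℝ) ≤ 1 - Real.cos (x * u) := by
        have := Real.cos_le_one (x * u); linarith
      rw [Real.norm_eq_abs, abs_of_nonneg (mul_nonneg hc hr)]
      have hb : 1 - Real.cos (x * u) ≤ 2 := by
        have := Real.neg_one_le_cos (x * u); linarith
      exact mul_le_mul_of_nonneg_right hb hr

lemma fbm_scaling {β : ℝ} (hβ0 : 0 < β) (x : ℝ) :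
    ∫ u in Set.Ioi (0:ℝ), (1 - Real.cos (x * u)) * u ^ (-1 - β)
      = |x| ^ β * ∫ u in Set.Ioi (0:ℝ), (1 - Real.cos u) * u ^ (-1 - β) := by
  rcases eq_or_ne x 0 with rfl | hx
  · simp [Real.zero_rpow hβ0.ne']
  · have hb : (0:ℝ) < |x| := abs_pos.mpr hx
    set g : ℝ → ℝ := fun u => (1 - Real.cos u) * u ^ (-1 - β) with hg
    have h1 : (∫ u in Set.Ioi (0:ℝ), g (|x| * u))
        = |x|⁻¹ * ∫ u in Set.Ioi (0:ℝ), g u := by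
      have := MeasureTheory.integral_comp_mul_left_Ioi g 0 hb
      simpa [mul_zero, smul_eq_mul] using this
    have hcosabs : ∀ u : ℝ, Real.cos (|x| * u) = Real.cos (x * u) := by
      intro u
      rcases abs_choice x with h | h <;> rw [h] <;> simp [Real.cos_neg, neg_mul]
    have h2 : (∫ u in Set.Ioi (0:ℝ), g (|x| * u))
        = |x| ^ (-1 - β) * ∫ u in Set.Ioi (0:ℝ), (1 - Real.cos (x * u)) * u ^ (-1 - β) := by
      rw [← MeasureTheory.integral_const_mul]
      apply setIntegral_congr_fun measurableSet_Ioi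
      intro u hu
      simp only [hg]
      rw [hcosabs u, Real.mul_rpow hb.le (le_of_lt hu)]
      ring
    have hne : |x| ^ (-1 - β) ≠ 0 := (Real.rpow_pos_of_pos hb _).ne'
    have key : |x| ^ (-1 - β) * (∫ u in Set.Ioi (0:ℝ), (1 - Real.cos (x * u)) * u ^ (-1 - β))
        = |x|⁻¹ * ∫ u in Set.Ioi (0:ℝ), g u := by rw [← h2, h1]
    have hpow : (|x| ^ (-1 - β))⁻¹ * |x|⁻¹ = |x| ^ β := by
      rw [show (-1 - β : ℝ) = -(1 + β) by ring, Real.rpow_neg hb.le, inv_inv,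
        ← Real.rpow_neg_one |x|, ← Real.rpow_add hb,
        show (1 + β + -1 : ℝ) = β by ring]
    calc ∫ u in Set.Ioi (0:ℝ), (1 - Real.cos (x * u)) * u ^ (-1 - β)
        = (|x| ^ (-1 - β))⁻¹ * (|x| ^ (-1 - β) *
            ∫ u in Set.Ioi (0:ℝ), (1 - Real.cos (x * u)) * u ^ (-1 - β)) := by
          rw [inv_mul_cancel_left₀ hne]
      _ = (|x| ^ (-1 - β))⁻¹ * (|x|⁻¹ * ∫ u in Set.Ioi (0:ℝ), g u) := by rw [key]
      _ = ((|x| ^ (-1 - β))⁻¹ * |x|⁻¹) * ∫ u in Set.Ioi (0:ℝ), g u := by ring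
      _ = |x| ^ β * ∫ u in Set.Ioi (0:ℝ), g u := by rw [hpow]

lemma fbm_c_pos {β : ℝ} (hβ0 : 0 < β) (hβ2 : β < 2) :
    0 < ∫ u in Set.Ioi (0:ℝ), (1 - Real.cos u) * u ^ (-1 - β) := by
  have hint : IntegrableOn (fun u : ℝ => (1 - Real.cos u) * u ^ (-1 - β)) (Set.Ioi 0) := by
    simpa using fbm_integrable hβ0 hβ2 1
  have hnn : 0 ≤ᵐ[volume.restrict (Set.Ioi (0:ℝ))]
      fun u : ℝ => (1 - Real.cos u) * u ^ (-1 - β) := by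
    filter_upwards [ae_restrict_mem measurableSet_Ioi] with u hu
    have := Real.cos_le_one u
    exact mul_nonneg (by linarith) (Real.rpow_nonneg (le_of_lt hu) _)
  have hmono : (∫ u in Set.Ioc (1:ℝ) 2, (1 - Real.cos u) * u ^ (-1 - β))
      ≤ ∫ u in Set.Ioi (0:ℝ), (1 - Real.cos u) * u ^ (-1 - β) := by
    apply setIntegral_mono_set hint hnn
    filter_upwards with u hu
    exact lt_trans one_pos hu.1
  refine lt_of_lt_of_le ?_ hmono
  rw [← intervalIntegral.integral_of_le (by norm_num : (1:ℝ) ≤ 2)]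
  apply intervalIntegral.intervalIntegral_pos_of_pos_on
  · apply ContinuousOn.intervalIntegrable
    apply ContinuousOn.mul
    · exact (continuous_const.sub Real.continuous_cos).continuousOn
    · refine ContinuousOn.rpow_const continuousOn_id fun u hu => Or.inl ?_
      rw [Set.uIcc_of_le (by norm_num : (1:ℝ) ≤ 2)] at hu
      exact ne_of_gt (lt_of_lt_of_le one_pos hu.1)
  · intro u hu
    have hu0 : (0:ℝ) < u := lt_trans one_pos hu.1
    have hcos : Real.cos u < 1 := by
      have := Real.cos_lt_cos_of_nonneg_of_le_pi le_rfl
        (le_trans hu.2.le (by linarith [Real.pi_gt_three])) hu0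
      rwa [Real.cos_zero] at this
    exact mul_pos (by linarith) (Real.rpow_pos_of_pos hu0 _)
  · norm_num

lemma fbm_sq_identity (n : ℕ) (a lam : Fin n → ℝ) :
    ∑ i, ∑ j, lam i * lam j *
        ((1 - Real.cos (a i)) + (1 - Real.cos (a j)) - (1 - Real.cos (a i - a j)))
      = (∑ i, lam i * (Real.cos (a i) - 1)) ^ 2 + (∑ i, lam i * Real.sin (a i)) ^ 2 := by
  have h : ∀ i j : Fin n, lam i * lam j *
        ((1 - Real.cos (a i)) + (1 - Real.cos (a j)) - (1 - Real.cos (a i - a j)))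
      = (lam i * (Real.cos (a i) - 1)) * (lam j * (Real.cos (a j) - 1))
        + (lam i * Real.sin (a i)) * (lam j * Real.sin (a j)) := by
    intro i j
    rw [Real.cos_sub]
    ring
  simp_rw [h]
  rw [sq, sq, Finset.sum_mul_sum, Finset.sum_mul_sum, ← Finset.sum_add_distrib]
  refine Finset.sum_congr rfl fun i _ => ?_
  rw [← Finset.sum_add_distrib]

/-- For `H ∈ (0,1)`, the covariance kernel
`C(s,t) = (1/2)(|s|^{2H} + |t|^{2H} − |s−t|^{2H})` of fractional Brownian
motion is positive semidefinite: for any points `t₁,…,tₙ ∈ ℝ` and reals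
`λ₁,…,λₙ`, the sum `∑_{i,j} λᵢ λⱼ C(tᵢ,tⱼ)` is nonnegative. -/
theorem fbm_covariance_posSemidef (H : ℝ) (hH : H ∈ Set.Ioo (0 : ℝ) 1)
    (n : ℕ) (t : Fin n → ℝ) (lam : Fin n → ℝ) :
    0 ≤ ∑ i, ∑ j, lam i * lam j *
      ((1 / 2) * (|t i| ^ (2 * H) + |t j| ^ (2 * H) - |t i - t j| ^ (2 * H))) := by
  obtain ⟨hH0, hH1⟩ := hH
  set β : ℝ := 2 * H with hβ
  have hβ0 : 0 < β := by positivity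
  have hβ2 : β < 2 := by simp only [hβ]; linarith
  set c : ℝ := ∫ u in Set.Ioi (0:ℝ), (1 - Real.cos u) * u ^ (-1 - β) with hc
  have hcpos : 0 < c := fbm_c_pos hβ0 hβ2
  set I : ℝ → ℝ := fun x => ∫ u in Set.Ioi (0:ℝ), (1 - Real.cos (x * u)) * u ^ (-1 - β)
    with hI
  have hrepr : ∀ x : ℝ, |x| ^ β = c⁻¹ * I x := by
    intro x
    rw [hI]
    simp only
    rw [fbm_scaling hβ0 x, ← hc, ← mul_assoc, mul_comm c⁻¹, mul_assoc,
      inv_mul_cancel₀ hcpos.ne', mul_one]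
  -- rewrite the sum
  have step1 : ∑ i, ∑ j, lam i * lam j *
      ((1 / 2) * (|t i| ^ (2 * H) + |t j| ^ (2 * H) - |t i - t j| ^ (2 * H)))
      = (2 * c)⁻¹ * ∑ i, ∑ j, lam i * lam j * (I (t i) + I (t j) - I (t i - t j)) := by
    rw [Finset.mul_sum]
    refine Finset.sum_congr rfl fun i _ => ?_
    rw [Finset.mul_sum]
    refine Finset.sum_congr rfl fun j _ => ?_
    rw [show (2 * H : ℝ) = β from rfl, hrepr (t i), hrepr (t j), hrepr (t i - t j)]
    field_simp
  rw [step1]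
  have hint : ∀ x : ℝ, IntegrableOn
      (fun u : ℝ => (1 - Real.cos (x * u)) * u ^ (-1 - β)) (Set.Ioi 0) :=
    fun x => fbm_integrable hβ0 hβ2 x
  -- each pair term as an integral
  set g : Fin n → Fin n → ℝ → ℝ := fun i j u => lam i * lam j *
      ((1 - Real.cos (t i * u)) * u ^ (-1 - β) + (1 - Real.cos (t j * u)) * u ^ (-1 - β)
        - (1 - Real.cos ((t i - t j) * u)) * u ^ (-1 - β)) with hgdef
  have hgint : ∀ i j, IntegrableOn (g i j) (Set.Ioi 0) :=
    fun i j => (((hint (t i)).add (hint (t j))).sub (hint (t i - t j))).const_mul _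
  have hgval : ∀ i j, ∫ u in Set.Ioi (0:ℝ), g i j u
      = lam i * lam j * (I (t i) + I (t j) - I (t i - t j)) := by
    intro i j
    have hadd : IntegrableOn (fun u : ℝ => (1 - Real.cos (t i * u)) * u ^ (-1 - β)
        + (1 - Real.cos (t j * u)) * u ^ (-1 - β)) (Set.Ioi 0) :=
      (hint (t i)).add (hint (t j))
    rw [hgdef]
    simp only
    rw [MeasureTheory.integral_const_mul,
      MeasureTheory.integral_sub hadd (hint (t i - t j)),
      MeasureTheory.integral_add (hint (t i)) (hint (t j))]
  have step2 : ∑ i, ∑ j, lam i * lam j * (I (t i) + I (t j) - I (t i - t j))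
      = ∫ u in Set.Ioi (0:ℝ), ∑ i, ∑ j, g i j u := by
    rw [MeasureTheory.integral_finset_sum _ (fun i _ =>
      integrable_finset_sum _ (fun j _ => hgint i j))]
    refine Finset.sum_congr rfl fun i _ => ?_
    rw [MeasureTheory.integral_finset_sum _ (fun j _ => hgint i j)]
    exact Finset.sum_congr rfl fun j _ => (hgval i j).symm
  rw [step2]
  have hnn : 0 ≤ ∫ u in Set.Ioi (0:ℝ), ∑ i, ∑ j, g i j u := by
    apply setIntegral_nonneg measurableSet_Ioi
    intro u hu
    have hfac : ∑ i, ∑ j, g i j u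
        = (∑ i, ∑ j, lam i * lam j * ((1 - Real.cos (t i * u)) + (1 - Real.cos (t j * u))
            - (1 - Real.cos (t i * u - t j * u)))) * u ^ (-1 - β) := by
      rw [Finset.sum_mul]
      refine Finset.sum_congr rfl fun i _ => ?_
      rw [Finset.sum_mul]
      refine Finset.sum_congr rfl fun j _ => ?_
      rw [hgdef]
      simp only
      rw [show t i * u - t j * u = (t i - t j) * u by ring]
      ring
    rw [hfac, fbm_sq_identity n (fun i => t i * u) lam]
    have := Real.rpow_nonneg (le_of_lt hu) (-1 - β)
    positivity
  positivity
end

section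
/- Let ρ : Λ → Z be a finitely supported neutral charge (∑_x ρ(x) = 0) on a box Λ ⊂ Z², and let D(ρ) ⊂ Z² be a box containing the support of ρ. Then there exist integer coefficients c_{ij}, indexed by nearest-neighbor edges (i,j) of D(ρ), with |c_{ij}| ≤ (1/2)·‖ρ‖₁, such that for every function σ : Λ → R, ⟨σ, ρ⟩ = ∑_{i∼j ∈ D(ρ)} c_{ij}·(σ(i) − σ(j)). -/
namespace DipoleAux

variable (a b : ℤ × ℤ)

def W : ℕ := (b.1 - a.1).toNat + 1
def H : ℕ := (b.2 - a.2).toNat + 1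
def N : ℕ := W a b * H a b

def p (k : ℕ) : ℤ × ℤ :=
  (if (k / W a b) % 2 = 0 then a.1 + ((k % W a b : ℕ) : ℤ)
   else b.1 - ((k % W a b : ℕ) : ℤ),
   a.2 + ((k / W a b : ℕ) : ℤ))

lemma W_pos : 0 < W a b := Nat.succ_pos _

lemma p_inj : Function.Injective (p a b) := by
  intro k m h
  have h2 : a.2 + ((k / W a b : ℕ) : ℤ) = a.2 + ((m / W a b : ℕ) : ℤ) :=
    congrArg Prod.snd h
  have hdiv : k / W a b = m / W a b := by omega
  have h1 := congrArg Prod.fst h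
  simp only [p, hdiv] at h1
  have hmod : k % W a b = m % W a b := by
    by_cases hp : (m / W a b) % 2 = 0 <;> simp only [hp, if_true, if_false] at h1 <;> omega
  have e1 := Nat.div_add_mod k (W a b)
  have e2 := Nat.div_add_mod m (W a b)
  rw [hdiv, hmod] at e1
  omega

lemma p_mem (hab : a ≤ b) {k : ℕ} (hk : k < N a b) : p a b k ∈ Finset.Icc a b := by
  obtain ⟨h1, h2⟩ := Prod.le_def.1 hab
  have hmod : k % W a b < W a b := Nat.mod_lt _ (W_pos a b)
  have hk' : k < H a b * W a b := by rw [N, mul_comm] at hk; exact hk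
  have hdiv : k / W a b < H a b := (Nat.div_lt_iff_lt_mul (W_pos a b)).2 hk'
  have hW : (W a b : ℤ) = b.1 - a.1 + 1 := by simp only [W]; omega
  have hH : (H a b : ℤ) = b.2 - a.2 + 1 := by simp only [H]; omega
  have hd0 : (0 : ℤ) ≤ ((k / W a b : ℕ) : ℤ) := Int.natCast_nonneg _
  have hm0 : (0 : ℤ) ≤ ((k % W a b : ℕ) : ℤ) := Int.natCast_nonneg _
  have hdZ : ((k / W a b : ℕ) : ℤ) < (H a b : ℤ) := by exact_mod_cast hdiv
  have hmZ : ((k % W a b : ℕ) : ℤ) < (W a b : ℤ) := by exact_mod_cast hmod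
  rw [Finset.mem_Icc, Prod.le_def, Prod.le_def]
  refine ⟨⟨?_, ?_⟩, ⟨?_, ?_⟩⟩ <;> simp only [p] <;>
    first
      | omega
      | (by_cases hp : (k / W a b) % 2 = 0 <;> simp only [hp, if_true, if_false] <;> omega)

lemma p_notMem (hab : a ≤ b) {k : ℕ} (hk : N a b ≤ k) : p a b k ∉ Finset.Icc a b := by
  have hk' : H a b * W a b ≤ k := by rw [N, mul_comm] at hk; exact hk
  have hdiv : H a b ≤ k / W a b := (Nat.le_div_iff_mul_le (W_pos a b)).2 hk'
  have hH : (H a b : ℤ) = b.2 - a.2 + 1 := by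
    obtain ⟨h1, h2⟩ := Prod.le_def.1 hab; simp only [H]; omega
  have hdZ : (H a b : ℤ) ≤ ((k / W a b : ℕ) : ℤ) := by exact_mod_cast hdiv
  rw [Finset.mem_Icc]
  intro ⟨_, h⟩
  have := (Prod.le_def.1 h).2
  simp only [p] at this
  omega

lemma image_p (hab : a ≤ b) :
    (Finset.range (N a b)).image (p a b) = Finset.Icc a b := by
  apply Finset.eq_of_subset_of_card_le
  · intro x hx
    obtain ⟨k, hk, rfl⟩ := Finset.mem_image.1 hx
    exact p_mem a b hab (Finset.mem_range.1 hk)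
  · rw [Finset.card_image_of_injective _ (p_inj a b), Finset.card_range]
    rw [Finset.Icc_prod_def, Finset.card_product, Int.card_Icc, Int.card_Icc]
    obtain ⟨h1, h2⟩ := Prod.le_def.1 hab
    have e1 : (b.1 + 1 - a.1).toNat = W a b := by simp only [W]; omega
    have e2 : (b.2 + 1 - a.2).toNat = H a b := by simp only [H]; omega
    rw [e1, e2]; exact le_of_eq rfl

lemma abs_helper (x y u v : ℤ)
    (h : (x - y = 1 ∧ u = v) ∨ (x - y = -1 ∧ u = v) ∨
         (x = y ∧ u - v = 1) ∨ (x = y ∧ u - v = -1)) :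
    |x - y| + |u - v| = 1 := by
  rcases h with ⟨h1, h2⟩ | ⟨h1, h2⟩ | ⟨h1, h2⟩ | ⟨h1, h2⟩ <;>
    rw [h1, h2] <;> simp

lemma p_step (hab : a ≤ b) {k : ℕ} (hk : k + 1 < N a b) :
    |(p a b k).1 - (p a b (k + 1)).1| + |(p a b k).2 - (p a b (k + 1)).2| = 1 := by
  obtain ⟨h1, h2⟩ := Prod.le_def.1 hab
  have hW : (W a b : ℤ) = b.1 - a.1 + 1 := by simp only [W]; omega
  have hWpos := W_pos a b
  have hmod : k % W a b < W a b := Nat.mod_lt _ hWpos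
  by_cases hc : k % W a b + 1 < W a b
  · -- same row
    have hk1 : k + 1 = (k % W a b + 1) + W a b * (k / W a b) := by
      have := Nat.div_add_mod k (W a b); omega
    have hd : (k + 1) / W a b = k / W a b := by
      rw [hk1, Nat.add_mul_div_left _ _ hWpos, Nat.div_eq_of_lt hc, Nat.zero_add]
    have hm : (k + 1) % W a b = k % W a b + 1 := by
      rw [hk1, Nat.add_mul_mod_self_left, Nat.mod_eq_of_lt hc]
    simp only [p, hd, hm]
    by_cases hp : (k / W a b) % 2 = 0 <;> simp only [hp, if_true, if_false] <;>
      apply abs_helper <;> omega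
  · -- new row
    have hc' : k % W a b + 1 = W a b := by omega
    have hk1 : k + 1 = W a b * (k / W a b + 1) := by
      have h := Nat.div_add_mod k (W a b)
      have h2 : W a b * (k / W a b + 1) = W a b * (k / W a b) + W a b := by ring
      omega
    have hd : (k + 1) / W a b = k / W a b + 1 := by
      rw [hk1, Nat.mul_div_cancel_left _ hWpos]
    have hm : (k + 1) % W a b = 0 := by rw [hk1, Nat.mul_mod_right]
    simp only [p, hd, hm]
    by_cases hp : (k / W a b) % 2 = 0
    · have hp' : ¬ ((k / W a b + 1) % 2 = 0) := by omega
      simp only [hp, hp', if_true, if_false]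
      apply abs_helper; omega
    · have hp' : (k / W a b + 1) % 2 = 0 := by omega
      simp only [hp, hp', if_true, if_false]
      apply abs_helper; omega


def S (ρ : ℤ × ℤ → ℤ) (k : ℕ) : ℤ := ∑ l ∈ Finset.range (k + 1), ρ (p a b l)

lemma sum_p_eq {β : Type*} [AddCommMonoid β] (hab : a ≤ b) (f : ℤ × ℤ → β) :
    ∑ l ∈ Finset.range (N a b), f (p a b l) = ∑ x ∈ Finset.Icc a b, f x := by
  rw [← image_p a b hab, Finset.sum_image (fun x _ y _ h => p_inj a b h)]

lemma sum_range_ge (hab : a ≤ b) (ρ₀ : ℤ × ℤ → ℤ)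
    (hsupp : ∀ x, x ∉ Finset.Icc a b → ρ₀ x = 0) {M : ℕ} (hM : N a b ≤ M) :
    ∑ l ∈ Finset.range M, ρ₀ (p a b l) = ∑ x ∈ Finset.Icc a b, ρ₀ x := by
  rw [← sum_p_eq a b hab ρ₀]
  symm
  apply Finset.sum_subset (Finset.range_subset_range.2 hM)
  intro l _ hl
  exact hsupp _ (p_notMem a b hab (by simpa using hl))

lemma S_eventually_zero (hab : a ≤ b) (ρ₀ : ℤ × ℤ → ℤ)
    (hsupp : ∀ x, x ∉ Finset.Icc a b → ρ₀ x = 0)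
    (hneutral : ∑ x ∈ Finset.Icc a b, ρ₀ x = 0)
    {k : ℕ} (hk : N a b ≤ k + 1) : S a b ρ₀ k = 0 := by
  rw [S, sum_range_ge a b hab ρ₀ hsupp hk, hneutral]

lemma S_bound (hab : a ≤ b) (ρ₀ : ℤ × ℤ → ℤ)
    (hsupp : ∀ x, x ∉ Finset.Icc a b → ρ₀ x = 0)
    (hneutral : ∑ x ∈ Finset.Icc a b, ρ₀ x = 0) (k : ℕ) :
    2 * |S a b ρ₀ k| ≤ ∑ x ∈ Finset.Icc a b, |ρ₀ x| := by
  set M := max (k + 1) (N a b) with hMdef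
  have hM : N a b ≤ M := le_max_right _ _
  have hkM : k + 1 ≤ M := le_max_left _ _
  have htotal : ∑ l ∈ Finset.range M, ρ₀ (p a b l) = 0 := by
    rw [sum_range_ge a b hab ρ₀ hsupp hM, hneutral]
  have hsplit : ∑ l ∈ Finset.range M, ρ₀ (p a b l) =
      S a b ρ₀ k + ∑ l ∈ Finset.Ico (k + 1) M, ρ₀ (p a b l) := by
    rw [S, ← Finset.sum_range_add_sum_Ico _ hkM]
  have h1 : |S a b ρ₀ k| ≤ ∑ l ∈ Finset.range (k + 1), |ρ₀ (p a b l)| :=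
    Finset.abs_sum_le_sum_abs _ _
  have h2 : |S a b ρ₀ k| ≤ ∑ l ∈ Finset.Ico (k + 1) M, |ρ₀ (p a b l)| := by
    have : S a b ρ₀ k = -(∑ l ∈ Finset.Ico (k + 1) M, ρ₀ (p a b l)) := by omega
    rw [this, abs_neg]
    exact Finset.abs_sum_le_sum_abs _ _
  have h3 : ∑ l ∈ Finset.range (k + 1), |ρ₀ (p a b l)|
      + ∑ l ∈ Finset.Ico (k + 1) M, |ρ₀ (p a b l)|
      = ∑ l ∈ Finset.range M, |ρ₀ (p a b l)| := by
    rw [← Finset.sum_range_add_sum_Ico _ hkM]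
  have h4 : ∑ l ∈ Finset.range M, |ρ₀ (p a b l)| = ∑ x ∈ Finset.Icc a b, |ρ₀ x| := by
    apply sum_range_ge a b hab (fun x => |ρ₀ x|) (fun x hx => by simp [hsupp x hx]) hM
  omega

lemma abel (ρ₀ : ℤ × ℤ → ℤ) (σ : ℤ × ℤ → ℝ) (n : ℕ) :
    ∑ k ∈ Finset.range (n + 1), σ (p a b k) * (ρ₀ (p a b k) : ℝ) =
      (∑ k ∈ Finset.range n, (S a b ρ₀ k : ℝ) * (σ (p a b k) - σ (p a b (k + 1))))
        + (S a b ρ₀ n : ℝ) * σ (p a b n) := by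
  induction n with
  | zero => simp [S]; ring
  | succ n ih =>
    rw [Finset.sum_range_succ, ih, Finset.sum_range_succ]
    have hS : S a b ρ₀ (n + 1) = S a b ρ₀ n + ρ₀ (p a b (n + 1)) := by
      rw [S, S, Finset.sum_range_succ]
    rw [hS]
    push_cast
    ring


lemma sum_sum_ite_pair {β : Type*} [AddCommMonoid β] (s : Finset (ℤ × ℤ)) (u v : ℤ × ℤ)
    (hu : u ∈ s) (hv : v ∈ s) (X : ℤ × ℤ → ℤ × ℤ → β) :
    ∑ i ∈ s, ∑ j ∈ s, (if u = i ∧ v = j then X i j else 0) = X u v := by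
  rw [← Finset.sum_product']
  have hcg : ∀ q ∈ s ×ˢ s,
      (if u = q.1 ∧ v = q.2 then X q.1 q.2 else 0) =
        (if (u, v) = q then X q.1 q.2 else 0) := by
    intro q hq
    by_cases h : (u, v) = q
    · rw [if_pos (Prod.ext_iff.1 h), if_pos h]
    · rw [if_neg (fun hc => h (Prod.ext_iff.2 hc)), if_neg h]
  rw [Finset.sum_congr rfl hcg, Finset.sum_ite_eq]
  rw [if_pos (Finset.mem_product.2 ⟨hu, hv⟩)]

end DipoleAux

/-- Dipole decomposition of a neutral charge: let `ρ : ℤ² → ℤ` be supported in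
the box `D = Icc a b` and neutral (`∑ ρ = 0`). Then there are integer
coefficients `c i j`, supported on nearest-neighbor pairs of `D` and with
`|c i j| ≤ (1/2)·‖ρ‖₁`, such that for every `σ : ℤ² → ℝ`,
`⟨σ, ρ⟩ = ∑_{i∼j ∈ D} c i j · (σ i − σ j)`. -/
theorem dipole_decomposition (a b : ℤ × ℤ) (hab : a ≤ b)
    (ρ : ℤ × ℤ → ℤ) (hsupp : ∀ x, x ∉ Finset.Icc a b → ρ x = 0)
    (hneutral : ∑ x ∈ Finset.Icc a b, ρ x = 0) :
    ∃ c : ℤ × ℤ → ℤ × ℤ → ℤ,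
      (∀ i j : ℤ × ℤ,
        (i ∉ Finset.Icc a b ∨ j ∉ Finset.Icc a b ∨
          |i.1 - j.1| + |i.2 - j.2| ≠ 1) → c i j = 0) ∧
      (∀ i j : ℤ × ℤ, 2 * |c i j| ≤ ∑ x ∈ Finset.Icc a b, |ρ x|) ∧
      (∀ σ : ℤ × ℤ → ℝ,
        ∑ x ∈ Finset.Icc a b, σ x * (ρ x : ℝ) =
          ∑ i ∈ Finset.Icc a b, ∑ j ∈ Finset.Icc a b,
            (if |i.1 - j.1| + |i.2 - j.2| = 1 then
              (c i j : ℝ) * (σ i - σ j) else 0)) := by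
  classical
  obtain ⟨M, hN⟩ : ∃ M, DipoleAux.N a b = M + 1 := by
    have h1 := DipoleAux.W_pos a b
    have h2 : 0 < DipoleAux.H a b := Nat.succ_pos _
    have : 0 < DipoleAux.N a b := Nat.mul_pos h1 h2
    exact ⟨DipoleAux.N a b - 1, by omega⟩
  refine ⟨fun i j => ∑ k ∈ Finset.range M,
      if DipoleAux.p a b k = i ∧ DipoleAux.p a b (k + 1) = j
      then DipoleAux.S a b ρ k else 0, ?_, ?_, ?_⟩
  · -- support
    intro i j hij
    apply Finset.sum_eq_zero
    intro k hk
    rw [if_neg]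
    rintro ⟨rfl, rfl⟩
    have hk1 : k + 1 < DipoleAux.N a b := by
      rw [hN]; exact Nat.add_lt_add_right (Finset.mem_range.1 hk) 1
    rcases hij with h | h | h
    · exact h (DipoleAux.p_mem a b hab (by omega))
    · exact h (DipoleAux.p_mem a b hab hk1)
    · exact h (DipoleAux.p_step a b hab hk1)
  · -- bound
    intro i j
    dsimp only
    by_cases h : ∃ k ∈ Finset.range M,
        DipoleAux.p a b k = i ∧ DipoleAux.p a b (k + 1) = j
    · obtain ⟨k, hk, hcond⟩ := h
      have heq : (∑ l ∈ Finset.range M,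
          if DipoleAux.p a b l = i ∧ DipoleAux.p a b (l + 1) = j
          then DipoleAux.S a b ρ l else 0) = DipoleAux.S a b ρ k := by
        rw [Finset.sum_eq_single_of_mem k hk]
        · rw [if_pos hcond]
        · intro l _ hlk
          rw [if_neg]
          rintro ⟨hl1, -⟩
          exact hlk (DipoleAux.p_inj a b (hl1.trans hcond.1.symm))
      rw [heq]
      exact DipoleAux.S_bound a b hab ρ hsupp hneutral k
    · push_neg at h
      have heq : (∑ l ∈ Finset.range M,
          if DipoleAux.p a b l = i ∧ DipoleAux.p a b (l + 1) = j
          then DipoleAux.S a b ρ l else 0) = 0 := by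
        apply Finset.sum_eq_zero
        intro l hl
        rw [if_neg (fun hc => h l hl hc.1 hc.2)]
      rw [heq, abs_zero, mul_zero]
      exact Finset.sum_nonneg fun x _ => abs_nonneg _
  · -- identity
    intro σ
    dsimp only
    -- LHS to path sum and Abel
    rw [← DipoleAux.sum_p_eq a b hab (fun x => σ x * (ρ x : ℝ)), hN,
      DipoleAux.abel a b ρ σ M,
      DipoleAux.S_eventually_zero a b hab ρ hsupp hneutral (le_of_eq hN)]
    rw [Int.cast_zero, zero_mul, add_zero]
    -- RHS
    have hrhs : ∀ i ∈ Finset.Icc a b, ∀ j ∈ Finset.Icc a b,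
        (if |i.1 - j.1| + |i.2 - j.2| = 1 then
          ((∑ k ∈ Finset.range M,
            if DipoleAux.p a b k = i ∧ DipoleAux.p a b (k + 1) = j
            then DipoleAux.S a b ρ k else 0 : ℤ) : ℝ) * (σ i - σ j) else 0) =
        ∑ k ∈ Finset.range M,
          (if DipoleAux.p a b k = i ∧ DipoleAux.p a b (k + 1) = j
            then (DipoleAux.S a b ρ k : ℝ) * (σ i - σ j) else 0) := by
      intro i _ j _
      by_cases hnb : |i.1 - j.1| + |i.2 - j.2| = 1
      · rw [if_pos hnb]
        push_cast
        rw [Finset.sum_mul]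
        apply Finset.sum_congr rfl
        intro k _
        by_cases hc : DipoleAux.p a b k = i ∧ DipoleAux.p a b (k + 1) = j
        · rw [if_pos hc, if_pos hc]
        · rw [if_neg hc, if_neg hc, zero_mul]
      · rw [if_neg hnb]
        symm
        apply Finset.sum_eq_zero
        intro k hk
        rw [if_neg]
        rintro ⟨rfl, rfl⟩
        exact hnb (DipoleAux.p_step a b hab
          (by rw [hN]; exact Nat.add_lt_add_right (Finset.mem_range.1 hk) 1))
    rw [Finset.sum_congr rfl fun i hi =>
      Finset.sum_congr rfl fun j hj => hrhs i hi j hj]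
    rw [Finset.sum_congr rfl fun i (hi : i ∈ Finset.Icc a b) => Finset.sum_comm]
    rw [Finset.sum_comm]
    apply Finset.sum_congr rfl
    intro k hk
    have hk1 : k + 1 < DipoleAux.N a b := by
      rw [hN]; exact Nat.add_lt_add_right (Finset.mem_range.1 hk) 1
    exact (DipoleAux.sum_sum_ite_pair (Finset.Icc a b) _ _
      (DipoleAux.p_mem a b hab (by omega)) (DipoleAux.p_mem a b hab hk1)
      (fun i j => (DipoleAux.S a b ρ k : ℝ) * (σ i - σ j))).symm
end
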